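/- Let k ≥ 3 be an integer and set α = k - 1 + √(k(k-2)) and β = k - 1 - √(k(k-2)). For every integer i ≥ 0, there exist positive integers n and m such that P(n;k) = C(m;k), where (m : ℝ) = (1/4)·(2 + ((k + √(k(k-2)))/√(k(k-2)))·α^i + ((-k + √(k(k-2)))/√(k(k-2)))·β^i) and (n : ℝ) = (k - 4 + (α^(i+1) + α^i + β^(i+1) + β^i)/2) / (2(k-2)); moreover the common value satisfies (P(n;k) : ℝ) = (k/(16(k-2))) · ((-2k² + 18k - 32)/k + α^(2i+1) + β^(2i+1)). -/

import Mathlib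

/-- The `n`-th `k`-gonal number: `P(n;k) = ((k-2)n² + (4-k)n)/2` (the numerator is always even). -/
def polygonal (k n : ℤ) : ℤ := ((k - 2) * n ^ 2 + (4 - k) * n) / 2

/-- The `m`-th centered `k`-gonal number: `C(m;k) = (km² - km + 2)/2` (the numerator is always even). -/
def centered (k m : ℤ) : ℤ := (k * m ^ 2 - k * m + 2) / 2

/-- `s = √(k(k-2))`. -/
noncomputable def pellSqrt (k : ℤ) : ℝ := Real.sqrt ((k : ℝ) * ((k : ℝ) - 2))

/-- `α = k - 1 + √(k(k-2))`. -/
noncomputable def pellAlpha (k : ℤ) : ℝ := (k : ℝ) - 1 + pellSqrt k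

/-- `β = k - 1 - √(k(k-2))`. -/
noncomputable def pellBeta (k : ℤ) : ℝ := (k : ℝ) - 1 - pellSqrt k

/-!
Writing `X = 2(k-2)n - (k-4)` and `Z = 2m - 1`, the equation `P(n;k) = C(m;k)` becomes the
generalized Pell equation `X² - k(k-2) Z² = 2k`, with the solution `X + Z√(k(k-2)) = k + √(k(k-2))`
coming from `n = m = 1`. Multiplying by the unit `α` of norm `1` is an integral affine map in
`(n, m)`, so its iterates give integer solutions, and conjugating gives the closed forms.
-/

lemma two_mul_polygonal (k n : ℤ) : 2 * polygonal k n = (k - 2) * n ^ 2 + (4 - k) * n := by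
  refine Int.mul_ediv_cancel' ?_
  obtain ⟨c, hc⟩ := Int.even_mul_pred_self n
  exact ⟨(k - 2) * c + n, by linear_combination (k - 2) * hc⟩

lemma two_mul_centered (k m : ℤ) : 2 * centered k m = k * m ^ 2 - k * m + 2 := by
  refine Int.mul_ediv_cancel' ?_
  obtain ⟨c, hc⟩ := Int.even_mul_pred_self m
  exact ⟨k * c + 1, by linear_combination k * hc⟩

lemma eight_mul_polygonal (k n : ℤ) :
    8 * (k - 2) * polygonal k n = (2 * (k - 2) * n - (k - 4)) ^ 2 - (k - 4) ^ 2 := by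
  linear_combination 4 * (k - 2) * two_mul_polygonal k n

/-- Multiplication by `α` on `X + Z√(k(k-2))`, written in the coordinates `(n, m)`. -/
def polygonalCenteredStep (k : ℤ) (p : ℤ × ℤ) : ℤ × ℤ :=
  ((k - 1) * p.1 + k * p.2 - (k - 2), (k - 2) * p.1 + (k - 1) * p.2 - (k - 3))

def polygonalCenteredSolution (k : ℤ) (i : ℕ) : ℤ × ℤ :=
  (polygonalCenteredStep k)^[i] (1, 1)

lemma polygonal_sub_centered_step (k : ℤ) (p : ℤ × ℤ) :
    polygonal k (polygonalCenteredStep k p).1 - centered k (polygonalCenteredStep k p).2 =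
      polygonal k p.1 - centered k p.2 := by
  refine mul_left_cancel₀ (two_ne_zero (α := ℤ)) ?_
  rw [mul_sub, mul_sub, two_mul_polygonal, two_mul_centered, two_mul_polygonal, two_mul_centered]
  simp only [polygonalCenteredStep]
  ring

lemma polygonal_solution_eq_centered (k : ℤ) (i : ℕ) :
    polygonal k (polygonalCenteredSolution k i).1 =
      centered k (polygonalCenteredSolution k i).2 := by
  induction i with
  | zero => simp [polygonalCenteredSolution, polygonal, centered]
  | succ i ih =>
    rw [← sub_eq_zero, polygonalCenteredSolution, Function.iterate_succ_apply',
      polygonal_sub_centered_step, ← polygonalCenteredSolution, ih, sub_self]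

lemma one_le_solution {k : ℤ} (hk : 2 ≤ k) (i : ℕ) :
    1 ≤ (polygonalCenteredSolution k i).1 ∧ 1 ≤ (polygonalCenteredSolution k i).2 := by
  induction i with
  | zero => simp [polygonalCenteredSolution]
  | succ i ih =>
    obtain ⟨hn, hm⟩ := ih
    rw [polygonalCenteredSolution, Function.iterate_succ_apply', ← polygonalCenteredSolution]
    constructor <;> simp only [polygonalCenteredStep] <;> nlinarith

/-- `X + Z t`: for `t = ±√(k(k-2))`, the images of `(n, m)` under the two embeddings of
`ℤ[√(k(k-2))]` into `ℝ`. -/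
def pellPoint (k : ℤ) (t : ℝ) (p : ℤ × ℤ) : ℝ :=
  (2 * ((k : ℝ) - 2) * p.1 - ((k : ℝ) - 4)) + (2 * p.2 - 1) * t

lemma pellPoint_step {k : ℤ} {t : ℝ} (ht : t ^ 2 = k * ((k : ℝ) - 2)) (p : ℤ × ℤ) :
    pellPoint k t (polygonalCenteredStep k p) = ((k : ℝ) - 1 + t) * pellPoint k t p := by
  simp only [pellPoint, polygonalCenteredStep]
  push_cast
  linear_combination (1 - 2 * (p.2 : ℝ)) * ht

lemma pellPoint_solution {k : ℤ} {t : ℝ} (ht : t ^ 2 = k * ((k : ℝ) - 2)) (i : ℕ) :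
    pellPoint k t (polygonalCenteredSolution k i) = ((k : ℝ) + t) * ((k : ℝ) - 1 + t) ^ i := by
  induction i with
  | zero => simp [polygonalCenteredSolution, pellPoint]; ring
  | succ i ih =>
    rw [polygonalCenteredSolution, Function.iterate_succ_apply', pellPoint_step ht,
      ← polygonalCenteredSolution, ih]
    ring

lemma pellSqrt_sq {k : ℤ} (hk : 2 ≤ k) : pellSqrt k ^ 2 = k * ((k : ℝ) - 2) := by
  have hk' : (2 : ℝ) ≤ k := by exact_mod_cast hk
  exact Real.sq_sqrt (by nlinarith)

lemma pellSqrt_pos {k : ℤ} (hk : 3 ≤ k) : 0 < pellSqrt k := by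
  have hk' : (3 : ℝ) ≤ k := by exact_mod_cast hk
  exact Real.sqrt_pos.2 (by nlinarith)

lemma pellAlpha_mul_pellBeta {k : ℤ} (hk : 2 ≤ k) : pellAlpha k * pellBeta k = 1 := by
  rw [pellAlpha, pellBeta]
  linear_combination -pellSqrt_sq hk

lemma pellPoint_solution_pellSqrt {k : ℤ} (hk : 2 ≤ k) (i : ℕ) :
    pellPoint k (pellSqrt k) (polygonalCenteredSolution k i) =
      ((k : ℝ) + pellSqrt k) * pellAlpha k ^ i :=
  pellPoint_solution (pellSqrt_sq hk) i

lemma pellPoint_solution_neg_pellSqrt {k : ℤ} (hk : 2 ≤ k) (i : ℕ) :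
    pellPoint k (-pellSqrt k) (polygonalCenteredSolution k i) =
      ((k : ℝ) - pellSqrt k) * pellBeta k ^ i := by
  rw [pellPoint_solution (by rw [neg_sq, pellSqrt_sq hk]), pellBeta]
  ring

lemma solution_fst_closed_form {k : ℤ} (hk : 2 ≤ k) (i : ℕ) :
    2 * (2 * ((k : ℝ) - 2) * (polygonalCenteredSolution k i).1 - ((k : ℝ) - 4)) =
      ((k : ℝ) + pellSqrt k) * pellAlpha k ^ i + ((k : ℝ) - pellSqrt k) * pellBeta k ^ i := by
  have hα := pellPoint_solution_pellSqrt hk i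
  have hβ := pellPoint_solution_neg_pellSqrt hk i
  simp only [pellPoint] at hα hβ
  linear_combination hα + hβ

lemma solution_snd_closed_form {k : ℤ} (hk : 2 ≤ k) (i : ℕ) :
    2 * pellSqrt k * (2 * ((polygonalCenteredSolution k i).2 : ℝ) - 1) =
      ((k : ℝ) + pellSqrt k) * pellAlpha k ^ i - ((k : ℝ) - pellSqrt k) * pellBeta k ^ i := by
  have hα := pellPoint_solution_pellSqrt hk i
  have hβ := pellPoint_solution_neg_pellSqrt hk i
  simp only [pellPoint] at hα hβ
  linear_combination hα - hβ

/-- `(k ± √(k(k-2)))² = 2k(k - 1 ± √(k(k-2)))`, so squaring the closed form of `X`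
produces odd powers of `α` and `β`. -/
lemma sq_closed_form {k : ℤ} (hk : 2 ≤ k) (i : ℕ) :
    (((k : ℝ) + pellSqrt k) * pellAlpha k ^ i + ((k : ℝ) - pellSqrt k) * pellBeta k ^ i) ^ 2 =
      2 * k * (pellAlpha k ^ (2 * i + 1) + pellBeta k ^ (2 * i + 1)) + 4 * k := by
  have hs := pellSqrt_sq hk
  have hαβ : pellAlpha k ^ i * pellBeta k ^ i = 1 := by
    rw [← mul_pow, pellAlpha_mul_pellBeta hk, one_pow]
  have hodd (x : ℝ) : x ^ (2 * i + 1) = x * (x ^ i) ^ 2 := by ring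
  rw [hodd, hodd]
  set a := pellAlpha k ^ i
  set b := pellBeta k ^ i
  rw [pellAlpha, pellBeta]
  linear_combination (a ^ 2 + b ^ 2 - 2) * hs + 2 * ((k : ℝ) ^ 2 - pellSqrt k ^ 2) * hαβ

lemma sixteen_mul_polygonal_solution {k : ℤ} (hk : 2 ≤ k) (i : ℕ) :
    16 * ((k : ℝ) - 2) * polygonal k (polygonalCenteredSolution k i).1 =
      k * (pellAlpha k ^ (2 * i + 1) + pellBeta k ^ (2 * i + 1)) - 2 * k ^ 2 + 18 * k - 32 := by
  have hP := congrArg (Int.cast : ℤ → ℝ)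
    (eight_mul_polygonal k (polygonalCenteredSolution k i).1)
  have hX := solution_fst_closed_form hk i
  push_cast at hP
  set X := 2 * ((k : ℝ) - 2) * (polygonalCenteredSolution k i).1 - ((k : ℝ) - 4)
  linear_combination 2 * hP + (2 * X + ((k : ℝ) + pellSqrt k) * pellAlpha k ^ i
    + ((k : ℝ) - pellSqrt k) * pellBeta k ^ i) / 2 * hX + sq_closed_form hk i / 2

theorem polygonal_eq_centered_solutions (k : ℤ) (hk : 3 ≤ k) (i : ℕ) :
    ∃ n m : ℤ, 1 ≤ n ∧ 1 ≤ m ∧ polygonal k n = centered k m ∧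
      (m : ℝ) = (1 / 4) * (2 + (((k : ℝ) + pellSqrt k) / pellSqrt k) * pellAlpha k ^ i
          + ((-(k : ℝ) + pellSqrt k) / pellSqrt k) * pellBeta k ^ i) ∧
      (n : ℝ) = ((k : ℝ) - 4 +
          (pellAlpha k ^ (i + 1) + pellAlpha k ^ i + pellBeta k ^ (i + 1) + pellBeta k ^ i) / 2) /
          (2 * ((k : ℝ) - 2)) ∧
      (polygonal k n : ℝ) = ((k : ℝ) / (16 * ((k : ℝ) - 2))) *
          ((-2 * (k : ℝ) ^ 2 + 18 * (k : ℝ) - 32) / (k : ℝ) +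
            pellAlpha k ^ (2 * i + 1) + pellBeta k ^ (2 * i + 1)) := by
  have hk2 : 2 ≤ k := by omega
  have hk2R : (k : ℝ) - 2 ≠ 0 := sub_ne_zero.2 (by exact_mod_cast (show k ≠ 2 by omega))
  have hs0 := (pellSqrt_pos hk).ne'
  obtain ⟨hn, hm⟩ := one_le_solution hk2 i
  refine ⟨_, _, hn, hm, polygonal_solution_eq_centered k i, ?_, ?_, ?_⟩
  · field_simp
    linear_combination solution_snd_closed_form hk2 i
  · have hα : pellAlpha k = k - 1 + pellSqrt k := rfl
    have hβ : pellBeta k = k - 1 - pellSqrt k := rfl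
    field_simp
    linear_combination solution_fst_closed_form hk2 i - pellAlpha k ^ i * hα - pellBeta k ^ i * hβ
  · field_simp
    linear_combination sixteen_mul_polygonal_solution hk2 i
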